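/- Define words over {0,1} by g_1 = 1 and g_n = g_{n-1}·0·1^n·0·g_{n-1} for n > 1. Then for all n ≥ 2 and k ≥ 2, the word 0^k·g_n is rich. -/

import Mathlib

def Rich {A : Type*} (w : List A) : Prop :=
  {p : List A | p.reverse = p ∧ p <:+: w}.ncard = w.length + 1
/-- The words `g 1 = 1`, `g n = g (n-1) ++ 0 ++ 1^n ++ 0 ++ g (n-1)` over `{0,1}`. -/
def g : ℕ → List (Fin 2)
  | 0 => []
  | 1 => [1]
  | (n+2) => g (n+1) ++ [0] ++ List.replicate (n+2) 1 ++ [0] ++ g (n+1)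

/-!
Appending a letter to a word creates at most one new palindromic factor, necessarily a suffix,
so richness can be checked one letter at a time: `w ++ [a]` is rich when `w` is and some
palindromic suffix of `w ++ [a]` does not occur in `w`.

Write `0^k g_(n+1) = 0^k g_n 0 1^(n+1) 0 g_n`. The palindromes created along the way are
`0 g_n 0`, which does not fit in `0^k g_n`; `1^j 0 g_(n-1) 0 1^j` for `j ≤ n`, which would force
`0 g_(n-1) 0` into `g_n`; `1^(n+1)`, longer than every run of ones in `0^k g_n`; and finally
`q^R 1^(n+1) q` for the prefixes `q` of `0 g_n`, which are new because the run `1^(n+1)` occurs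
only once.
-/

open List

namespace List

variable {α : Type*}

theorem append_cons_eq_append_append_of_not_mem {x y u s v : List α} {a : α} (ha : a ∉ s)
    (h : x ++ a :: y = u ++ s ++ v) :
    (∃ v₀, x = u ++ s ++ v₀) ∨ ∃ u₀, u = x ++ a :: u₀ ∧ y = u₀ ++ s ++ v := by
  rw [append_assoc, append_eq_append_iff] at h
  rcases h with ⟨w, rfl, h⟩ | ⟨w, rfl, h⟩
  · rcases w with _ | ⟨b, w⟩
    · rcases s with _ | ⟨b, s⟩
      · exact Or.inl ⟨[], by simp⟩
      · exact absurd (by simp_all) ha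
    · simp only [cons_append, cons.injEq] at h
      exact Or.inr ⟨w, by rw [h.1], by rw [h.2, append_assoc]⟩
  · rw [append_eq_append_iff] at h
    rcases h with ⟨w', rfl, -⟩ | ⟨w', rfl, h⟩
    · exact Or.inl ⟨w', by simp⟩
    · rcases w' with _ | ⟨b, w'⟩
      · exact Or.inl ⟨[], by simp⟩
      · exact absurd (by simp_all) ha

theorem IsInfix.infix_or_infix_of_not_mem {s x y : List α} {a : α} (h : s <:+: x ++ a :: y)
    (ha : a ∉ s) : s <:+: x ∨ s <:+: y := by
  obtain ⟨u, v, h⟩ := h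
  rcases append_cons_eq_append_append_of_not_mem ha h.symm with ⟨v₀, rfl⟩ | ⟨u₀, -, rfl⟩
  · exact Or.inl (infix_append _ _ _)
  · exact Or.inr (infix_append _ _ _)

theorem eq_of_append_replicate_append_eq {A B A' B' : List α} {a c : α} {m : ℕ} (hac : a ≠ c)
    (hA : ¬ replicate m c <:+: A) (hB : ¬ replicate m c <:+: B)
    (h : A ++ a :: (replicate m c ++ a :: B) = A' ++ replicate m c ++ B') : A' = A ++ [a] := by
  have ha : a ∉ replicate m c := fun h => hac (eq_of_mem_replicate h)
  rcases append_cons_eq_append_append_of_not_mem ha h with ⟨v₀, rfl⟩ | ⟨u₀, rfl, h'⟩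
  · exact absurd (infix_append _ _ _) hA
  rcases append_cons_eq_append_append_of_not_mem ha h' with ⟨v₀, h''⟩ | ⟨u₀', -, rfl⟩
  · have : u₀.length = 0 := by have := congrArg length h''; simp at this; omega
    simp [length_eq_zero_iff.mp this]
  · exact absurd (infix_append _ _ _) hB

theorem IsInfix.of_replicate_append_cons {s y : List α} {c d : α} {i : ℕ}
    (h : s <:+: replicate i c ++ d :: y) (hs : replicate (i + 1) c <+: s) (hd : d ≠ c) :
    s <:+: y := by
  have hd' : d ∉ replicate (i + 1) c := fun h => hd (eq_of_mem_replicate h)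
  rw [← singleton_append, ← append_assoc, infix_append_iff_ne_nil] at h
  rcases h with h | h | ⟨l₁, l₂, hl₁, -, rfl, hl₁s, -⟩
  · have := (hs.isInfix.trans h).eq_of_length (by simp)
    exact absurd (this ▸ mem_append_right _ (mem_singleton_self d)) hd'
  · exact h
  · obtain ⟨t, rfl, ht⟩ := (suffix_concat_iff.mp hl₁s).resolve_left hl₁
    have hlen : (t ++ [d]).length ≤ (replicate (i + 1) c).length := by
      simpa using ht.length_le
    have := prefix_of_prefix_length_le (prefix_append _ _) hs hlen
    exact absurd (this.subset (by simp)) hd'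

theorem IsInfix.of_replicate_append {s y : List α} {c d : α} {k : ℕ}
    (h : s <:+: replicate k c ++ y) (hs : [d] <+: s) (hd : d ≠ c) : s <:+: y := by
  induction k with
  | zero => simpa using h
  | succ k ih =>
    rw [replicate_succ, cons_append] at h
    exact ih (IsInfix.of_replicate_append_cons (i := 0) (c := d) (by simpa using h) hs hd.symm)

theorem IsInfix.infix_or_infix_of_append_replicate_succ {s x y : List α} {c : α} {r : ℕ}
    (h : s <:+: x ++ replicate (r + 1) c ++ y) (hs : ¬ replicate (r + 1) c <:+: s) :
    s <:+: x ++ replicate r c ∨ s <:+: replicate r c ++ y := by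
  obtain ⟨u, v, h⟩ := h
  have hu : u <+: x ++ replicate (r + 1) c ++ y := ⟨s ++ v, by rw [← h, append_assoc]⟩
  have hus : u ++ s <+: x ++ replicate (r + 1) c ++ y := ⟨v, h⟩
  by_cases h₁ : x.length + 1 ≤ u.length
  · have hx : x ++ [c] <+: x ++ replicate (r + 1) c ++ y :=
      ⟨replicate r c ++ y, by simp [replicate_succ]⟩
    obtain ⟨u', rfl⟩ := prefix_of_prefix_length_le hx hu (by simpa using h₁)
    refine Or.inr ⟨u', v, ?_⟩
    simpa [replicate_succ] using h
  by_cases h₂ : u.length + s.length ≤ x.length + r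
  · have hx : x ++ replicate r c <+: x ++ replicate (r + 1) c ++ y :=
      ⟨c :: y, by simp [replicate_succ']⟩
    exact Or.inl (infix_append_right.trans
      (prefix_of_prefix_length_le hus hx (by simpa using h₂)).isInfix)
  · obtain ⟨x', rfl⟩ :=
      prefix_of_prefix_length_le hu ((prefix_append x _).trans (prefix_append _ y)) (by omega)
    have hx' : x' ++ replicate (r + 1) c <+: s ++ v := by
      refine ⟨y, append_cancel_left (as := u) ?_⟩
      simpa [append_assoc] using h.symm
    have := prefix_of_prefix_length_le hx' (prefix_append s v) (by simp at h₂ ⊢; omega)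
    exact absurd (infix_append_right.trans this.isInfix) hs

theorem IsSuffix.infix_of_prefix_of_length_lt {s t w : List α} {a : α}
    (ht : t <:+ w ++ [a]) (hst : s <+: t) (hlen : s.length < t.length) : s <:+: w := by
  obtain ⟨t', rfl, ht'⟩ :=
    (suffix_concat_iff.mp ht).resolve_left (ne_nil_of_length_pos (by omega))
  exact (prefix_of_prefix_length_le hst (prefix_append t' [a])
    (by simp at hlen; omega)).isInfix.trans ht'.isInfix

end List

section Richness

variable {α : Type*}

def palFactors (w : List α) : Set (List α) := {p | p.reverse = p ∧ p <:+: w}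

theorem rich_iff {w : List α} : Rich w ↔ (palFactors w).ncard = w.length + 1 := Iff.rfl

theorem palFactors_finite (w : List α) : (palFactors w).Finite :=
  (finite_toSet w.sublists).subset fun _ hp => mem_sublists.mpr hp.2.sublist

theorem palFactors_mono {w w' : List α} (h : w <:+: w') : palFactors w ⊆ palFactors w' :=
  fun _ hp => ⟨hp.1, hp.2.trans h⟩

/-- Of two palindromic suffixes of `w ++ [a]`, the shorter is a prefix of the longer, so it occurs
in `w` unless they are equal. -/
theorem eq_of_mem_palFactors_append_singleton {w s t : List α} {a : α}
    (hs : s ∈ palFactors (w ++ [a])) (hs' : ¬ s <:+: w)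
    (ht : t ∈ palFactors (w ++ [a])) (ht' : ¬ t <:+: w) : s = t := by
  wlog hlen : s.length ≤ t.length generalizing s t
  · exact (this ht ht' hs hs' (by omega)).symm
  have hsuf := (infix_concat_iff.mp hs.2).resolve_right hs'
  have htuf := (infix_concat_iff.mp ht.2).resolve_right ht'
  have hst : s <+: t := by
    rw [← reverse_suffix, hs.1, ht.1]
    exact suffix_of_suffix_length_le hsuf htuf hlen
  by_contra hne
  exact hs' (htuf.infix_of_prefix_of_length_lt hst
    (lt_of_le_of_ne hlen fun h => hne (hst.eq_of_length h)))

theorem ncard_palFactors_append_singleton_le (w : List α) (a : α) :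
    (palFactors (w ++ [a])).ncard ≤ (palFactors w).ncard + 1 := by
  obtain ⟨s, hs⟩ : ∃ s, palFactors (w ++ [a]) ⊆ insert s (palFactors w) := by
    by_cases h : ∃ s ∈ palFactors (w ++ [a]), ¬ s <:+: w
    · obtain ⟨s, hs, hs'⟩ := h
      refine ⟨s, fun t ht => ?_⟩
      by_cases ht' : t <:+: w
      · exact Or.inr ⟨ht.1, ht'⟩
      · exact Or.inl (eq_of_mem_palFactors_append_singleton ht ht' hs hs')
    · simp only [not_exists, not_and, not_not] at h
      exact ⟨[], fun t ht => Or.inr ⟨ht.1, h t ht⟩⟩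
  exact (Set.ncard_le_ncard hs ((palFactors_finite w).insert s)).trans (Set.ncard_insert_le _ _)

theorem Rich.append_singleton {w s : List α} {a : α} (hw : Rich w) (hs : s.reverse = s)
    (hsuf : s <:+ w ++ [a]) (hnew : ¬ s <:+: w) : Rich (w ++ [a]) := by
  rw [rich_iff] at hw ⊢
  have hins : insert s (palFactors w) ⊆ palFactors (w ++ [a]) :=
    Set.insert_subset ⟨hs, hsuf.isInfix⟩ (palFactors_mono infix_append_left)
  have hge := Set.ncard_le_ncard hins (palFactors_finite _)
  rw [Set.ncard_insert_of_notMem (fun h => hnew h.2) (palFactors_finite w)] at hge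
  have hle := ncard_palFactors_append_singleton_le w a
  simp only [length_append, length_singleton]
  omega

theorem rich_replicate (k : ℕ) (a : α) : Rich (replicate k a) := by
  induction k with
  | zero => exact Set.ncard_eq_one.mpr ⟨[], by ext; simp +contextual⟩
  | succ k ih =>
    rw [replicate_succ']
    refine ih.append_singleton (s := replicate (k + 1) a) (by simp) (by rw [replicate_succ']) ?_
    exact fun h => by simpa using h.length_le

/-- Palindromic closure around a palindrome `X` occurring only once: each new letter `b` creates
the new palindrome `(q ++ [b]).reverse ++ X ++ (q ++ [b])`, which contains the unique `X`. -/
theorem Rich.append_of_unique {A X q : List α} (h : Rich (A ++ X)) (hX : X.reverse = X)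
    (hq : q.reverse <:+ A) (huniq : ∀ U V, A ++ X ++ q = U ++ X ++ V → U = A) :
    Rich (A ++ X ++ q) := by
  induction q using reverseRecOn with
  | nil => simpa using h
  | append_singleton q b ih =>
    have hq' : q.reverse <:+ A := (suffix_cons _ _).trans (by simpa using hq)
    have huniq' : ∀ U V, A ++ X ++ q = U ++ X ++ V → U = A := fun U V hUV =>
      huniq U (V ++ [b]) (by rw [← append_assoc, hUV]; simp)
    obtain ⟨u, hu⟩ := hq
    rw [← append_assoc]
    refine (ih hq' huniq').append_singleton (s := (q ++ [b]).reverse ++ X ++ (q ++ [b]))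
      (by simp [hX]) ⟨u, by rw [← hu]; simp⟩ ?_
    rintro ⟨u', v', h'⟩
    have hA := huniq (u' ++ (q ++ [b]).reverse) (q ++ [b] ++ v' ++ [b])
      (by rw [← append_assoc, ← h']; simp)
    have := congrArg length h'
    simp only [length_append, length_reverse, length_singleton] at this
    have := congrArg length hA
    simp only [length_append, length_reverse, length_singleton] at this
    omega

end Richness

section BinaryWords

theorem g_reverse : ∀ n, (g n).reverse = g n
  | 0 => rfl
  | 1 => rfl
  | n + 2 => by simp [g, g_reverse (n + 1)]

theorem g_succ_succ (n : ℕ) :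
    g (n + 2) = g (n + 1) ++ 0 :: (replicate (n + 2) 1 ++ 0 :: g (n + 1)) := by
  simp [g]

theorem exists_g_succ_eq_cons (n : ℕ) : ∃ t, g (n + 1) = 1 :: t := by
  cases n with
  | zero => exact ⟨[], rfl⟩
  | succ n =>
    obtain ⟨t, ht⟩ := exists_g_succ_eq_cons n
    exact ⟨_, by rw [g_succ_succ, ht, cons_append]⟩

theorem replicate_one_not_infix_g : ∀ {n i : ℕ}, n < i → ¬ replicate i (1 : Fin 2) <:+: g n
  | 0, _, h, hi => absurd hi.length_le (by simp [g]; omega)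
  | 1, _, h, hi => absurd hi.length_le (by simp [g]; omega)
  | n + 2, i, h, hi => by
    have h0 : (0 : Fin 2) ∉ replicate i 1 := by simp
    rw [g_succ_succ] at hi
    rcases hi.infix_or_infix_of_not_mem h0 with hi | hi
    · exact replicate_one_not_infix_g (by omega) hi
    rcases hi.infix_or_infix_of_not_mem h0 with hi | hi
    · exact absurd hi.length_le (by simp; omega)
    · exact replicate_one_not_infix_g (by omega) hi

theorem replicate_one_not_infix_replicate_zero_append_g {k n i : ℕ} (h : n < i) :
    ¬ replicate i (1 : Fin 2) <:+: replicate k 0 ++ g n := fun hi =>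
  replicate_one_not_infix_g h (hi.of_replicate_append (d := 1)
    (by cases i <;> simp_all [replicate_succ]) (by decide))

/-- The word between the central run `1^(n+1)` of `g (n+1)` and the end of `g (n+1) ++ [0]`:
it is `0 g_n 0`, except `gap 0 = [0]` since `g 1` does not follow the recursion. -/
def gap : ℕ → List (Fin 2)
  | 0 => [0]
  | n + 1 => 0 :: g (n + 1) ++ [0]

theorem gap_reverse (n : ℕ) : (gap n).reverse = gap n := by
  cases n <;> simp [gap, g_reverse]

theorem replicate_append_gap_suffix (n : ℕ) :
    replicate (n + 1) 1 ++ gap n <:+ g (n + 1) ++ [0] := by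
  cases n with
  | zero => exact suffix_refl _
  | succ n => exact ⟨g (n + 1) ++ [0], by simp [gap, g_succ_succ]⟩

theorem gap_not_infix_g (n : ℕ) : ¬ gap n <:+: g (n + 1) := by
  cases n with
  | zero => decide
  | succ n =>
    intro h
    have hrun : ¬ replicate (n + 2) (1 : Fin 2) <:+: gap (n + 1) := by
      intro hr
      rcases hr.infix_or_infix_of_not_mem (x := []) (by simp) with hr | hr
      · exact absurd hr.length_le (by simp)
      rcases hr.infix_or_infix_of_not_mem (y := []) (by simp) with hr | hr
      · exact replicate_one_not_infix_g (by omega) hr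
      · exact absurd hr.length_le (by simp)
    have hright : ¬ gap (n + 1) <:+: replicate (n + 1) 1 ++ 0 :: g (n + 1) := fun h =>
      absurd (h.of_replicate_append (d := 0) ⟨_, rfl⟩ (by decide)).length_le (by simp [gap])
    have hg : g (n + 2) = (g (n + 1) ++ [0]) ++ replicate (n + 2) 1 ++ 0 :: g (n + 1) := by
      simp [g]
    rw [hg] at h
    rcases h.infix_or_infix_of_append_replicate_succ hrun with h | h
    · rw [← reverse_infix, gap_reverse] at h
      exact hright (by simpa [g_reverse] using h)
    · exact hright h

variable {k n : ℕ}

theorem gap_succ_not_infix_replicate_zero_append_g :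
    ¬ gap (n + 1) <:+: replicate k 0 ++ g (n + 1) := by
  rintro ⟨u, v, h⟩
  obtain ⟨t, ht⟩ := exists_g_succ_eq_cons n
  have hpre : u ++ [0, 1] <+: replicate k 0 ++ g (n + 1) :=
    ⟨t ++ [0] ++ v, by rw [← h, gap, ht]; simp⟩
  have hlen := congrArg length h
  simp only [gap, length_append, length_cons, length_replicate] at hlen
  have := prefix_of_prefix_length_le hpre (prefix_append _ _) (by simp; omega)
  exact absurd (this.subset (by simp : (1 : Fin 2) ∈ u ++ [0, 1])) (by simp)

theorem replicate_append_gap_append_replicate_not_infix (j : ℕ) :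
    ¬ replicate (j + 1) 1 ++ gap n ++ replicate (j + 1) 1 <:+:
      replicate k 0 ++ g (n + 1) ++ 0 :: replicate j 1 := by
  set s := replicate (j + 1) (1 : Fin 2) ++ gap n ++ replicate (j + 1) 1
  have hs : replicate (j + 1) 1 <+: s := by simp [s, append_assoc]
  have hs₁ : [1] <+: s := (prefix_append [1] (replicate j 1)).trans hs
  intro h
  have h₁ : s <:+: g (n + 1) ++ 0 :: replicate j 1 := by
    rw [append_assoc] at h
    exact h.of_replicate_append hs₁ (by decide)
  have h₂ : s <:+: replicate j 1 ++ 0 :: g (n + 1) := by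
    rw [← reverse_infix] at h₁
    simpa [s, gap_reverse, g_reverse, append_assoc] using h₁
  exact gap_not_infix_g n
    ((infix_append _ _ _).trans (h₂.of_replicate_append_cons hs (by decide)))

theorem Rich.append_zero_replicate_one (h : Rich (replicate k 0 ++ g (n + 1) ++ [0])) {j : ℕ}
    (hj : j ≤ n + 1) : Rich (replicate k 0 ++ g (n + 1) ++ 0 :: replicate j 1) := by
  induction j with
  | zero => simpa using h
  | succ j ih =>
    have hsuf : replicate (j + 1) 1 ++ gap n <:+ g (n + 1) ++ [0] :=
      (suffix_append_self_iff.mpr (suffix_replicate_iff.mpr (by simp; omega))).trans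
        (replicate_append_gap_suffix n)
    rw [replicate_succ', ← cons_append, ← append_assoc]
    refine (ih (by omega)).append_singleton (by simp [gap_reverse, append_assoc]) ?_
      (replicate_append_gap_append_replicate_not_infix j)
    have hw : replicate k 0 ++ g (n + 1) ++ 0 :: replicate j 1 ++ [1] =
        replicate k 0 ++ (g (n + 1) ++ [0]) ++ replicate (j + 1) 1 := by
      simp [replicate_succ']
    rw [hw, suffix_append_self_iff]
    exact suffix_append_of_suffix hsuf

theorem Rich.replicate_zero_append_g_succ (hk : k ≠ 0) (h : Rich (replicate k 0 ++ g (n + 1))) :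
    Rich (replicate k 0 ++ g (n + 2)) := by
  set W := replicate k (0 : Fin 2) ++ g (n + 1)
  have h₀ : Rich (W ++ [0]) := by
    refine h.append_singleton (gap_reverse (n + 1)) ⟨replicate (k - 1) 0, ?_⟩
      gap_succ_not_infix_replicate_zero_append_g
    obtain ⟨k, rfl⟩ := Nat.exists_eq_succ_of_ne_zero hk
    simp [W, gap, replicate_succ']
  have h₁ : Rich (W ++ 0 :: replicate (n + 2) 1) := by
    rw [replicate_succ', ← cons_append, ← append_assoc]
    refine (h₀.append_zero_replicate_one le_rfl).append_singleton (s := replicate (n + 2) 1)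
      (by simp) ⟨W ++ [0], by simp [W, replicate_succ']⟩ fun hr => ?_
    rcases hr.infix_or_infix_of_not_mem (by simp) with hr | hr
    · exact replicate_one_not_infix_replicate_zero_append_g (by omega) hr
    · exact absurd hr.length_le (by simp)
  have h₂ := (show Rich (W ++ [0] ++ replicate (n + 2) 1) by simpa using h₁).append_of_unique
    (q := 0 :: g (n + 1)) (by simp) ⟨replicate k 0, by simp [W, g_reverse]⟩ fun U V hUV =>
      eq_of_append_replicate_append_eq (m := n + 2) (by decide)
        (replicate_one_not_infix_replicate_zero_append_g (Nat.lt_succ_self _))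
        (replicate_one_not_infix_g (Nat.lt_succ_self _)) (by simpa using hUV)
  simpa [W, g_succ_succ] using h₂

theorem rich_replicate_zero_append_g (hk : k ≠ 0) : ∀ n, Rich (replicate k 0 ++ g n)
  | 0 => by simpa [g] using rich_replicate k (0 : Fin 2)
  | 1 => (rich_replicate k 0).append_singleton (s := [1]) rfl (suffix_append _ _)
      fun h => by simpa using h.subset (mem_singleton_self 1)
  | n + 2 => (rich_replicate_zero_append_g hk (n + 1)).replicate_zero_append_g_succ hk

end BinaryWords

theorem stmt16_general (n k : ℕ) (hk : 2 ≤ k) :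
    Rich (List.replicate k (0 : Fin 2) ++ g n) :=
  rich_replicate_zero_append_g (by omega) n

theorem stmt16 (n k : ℕ) (hn : 2 ≤ n) (hk : 2 ≤ k) :
    Rich (List.replicate k (0 : Fin 2) ++ g n) :=
  stmt16_general n k hk
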